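/- arXiv:1704.07278 — 2 statements merged into one kernel-verified Lean document; each statement's English description precedes it below -/
import Mathlib

section
/- Fix an integer m ≥ 1 and a sign ±. The map λ_± is infinitely differentiable, and for every point p ∈ ℝ^m × ℝ^{m+1} the alternating bilinear form B_±(p)(V, W) := (Dλ_±(p) V)(W) − (Dλ_±(p) W)(V) (where Dλ_±(p) denotes the Fréchet derivative of λ_± at p) is nondegenerate on the hyperplane ker λ_±(p): for every nonzero V ∈ ker λ_±(p) there exists W ∈ ker λ_±(p) with B_±(p)(V, W) ≠ 0. (This says that α_± is a contact form on ℝ^m × ℝ^{m+1}, since B_±(p) is the exterior derivative dα_± at p.) -/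
/-!
STATEMENT 2: Fix m ≥ 1 and a sign ε ∈ {1, −1}.  The 1-form
α_± = ε e^{t₁+⋯+t_m} dθ₀ + ∑ᵢ e^{−tᵢ} dθᵢ on ℝ^m × ℝ^{m+1} is encoded as the map
`lam` with lam(t,θ)(u,v) = ε e^{∑ tᵢ} v₀ + ∑ᵢ e^{−tᵢ} v_i.  Then lam is C^∞, and
for every point p the alternating bilinear form
B(p)(V,W) := (Dlam(p) V)(W) − (Dlam(p) W)(V) is nondegenerate on the hyperplane
ker lam(p): for every nonzero V ∈ ker lam(p) there is W ∈ ker lam(p) with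
B(p)(V,W) ≠ 0.  (α_± is a contact form on ℝ^m × ℝ^{m+1}.)
-/
set_option maxHeartbeats 1600000 in
theorem stmt_2 (m : ℕ) (hm : 1 ≤ m) (ε : ℝ) (hε : ε = 1 ∨ ε = -1)
    (lam : (Fin m → ℝ) × (Fin (m + 1) → ℝ) →
      ((Fin m → ℝ) × (Fin (m + 1) → ℝ)) →L[ℝ] ℝ)
    (hlam : ∀ (t : Fin m → ℝ) (θ : Fin (m + 1) → ℝ) (u : Fin m → ℝ) (v : Fin (m + 1) → ℝ),
      lam (t, θ) (u, v) =
        ε * Real.exp (∑ i, t i) * v 0 + ∑ i : Fin m, Real.exp (-(t i)) * v i.succ) :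
    ContDiff ℝ (⊤ : ℕ∞) lam ∧
      ∀ (p V : (Fin m → ℝ) × (Fin (m + 1) → ℝ)), lam p V = 0 → V ≠ 0 →
        ∃ W : (Fin m → ℝ) × (Fin (m + 1) → ℝ), lam p W = 0 ∧
          (fderiv ℝ lam p V) W - (fderiv ℝ lam p W) V ≠ 0 := by
  classical
  have hε0 : ε ≠ 0 := by rcases hε with h | h <;> simp [h]
  -- projections
  let P : Fin (m+1) → ((Fin m → ℝ) × (Fin (m + 1) → ℝ) →L[ℝ] ℝ) :=
    fun j => (ContinuousLinearMap.proj j).comp (ContinuousLinearMap.snd ℝ _ _)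
  let Q : Fin m → ((Fin m → ℝ) × (Fin (m + 1) → ℝ) →L[ℝ] ℝ) :=
    fun i => (ContinuousLinearMap.proj i).comp (ContinuousLinearMap.fst ℝ _ _)
  let S : (Fin m → ℝ) × (Fin (m + 1) → ℝ) →L[ℝ] ℝ := ∑ i, Q i
  let L : (Fin m → ℝ) × (Fin (m + 1) → ℝ) → ((Fin m → ℝ) × (Fin (m + 1) → ℝ) →L[ℝ] ℝ) :=
    fun p => (ε * Real.exp (∑ i, p.1 i)) • P 0 + ∑ i : Fin m, Real.exp (-(p.1 i)) • P i.succ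
  have hlamL : lam = L := by
    funext p
    apply ContinuousLinearMap.ext; intro V
    have h := hlam p.1 p.2 V.1 V.2
    simpa [L, P] using h
  have hsmooth : ContDiff ℝ (⊤ : ℕ∞) L := by
    refine ContDiff.add ?_ ?_
    · refine ContDiff.smul_const ?_ (P 0)
      exact contDiff_const.mul (Real.contDiff_exp.comp (ContDiff.sum fun i _ =>
        by exact (Q i).contDiff))
    · refine ContDiff.sum fun i _ => ContDiff.smul_const ?_ (P i.succ)
      exact Real.contDiff_exp.comp
        ((-(ContinuousLinearMap.proj i).comp (ContinuousLinearMap.fst ℝ _ _)) :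
          (Fin m → ℝ) × (Fin (m + 1) → ℝ) →L[ℝ] ℝ).contDiff
  -- derivative computation
  have hsum : ∀ p : (Fin m → ℝ) × (Fin (m + 1) → ℝ),
      HasFDerivAt (fun q : (Fin m → ℝ) × (Fin (m + 1) → ℝ) => ∑ i, q.1 i) S p := by
    intro p
    have h : (fun q : (Fin m → ℝ) × (Fin (m + 1) → ℝ) => ∑ i, q.1 i) = ⇑S := by
      funext q; simp [S, Q]
    rw [h]; exact S.hasFDerivAt
  have hD : ∀ p : (Fin m → ℝ) × (Fin (m + 1) → ℝ),
      HasFDerivAt L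
        (((ε * Real.exp (∑ i, p.1 i)) • S).smulRight (P 0) +
          ∑ i : Fin m, ((Real.exp (-(p.1 i))) • (-(Q i))).smulRight (P i.succ)) p := by
    intro p
    refine HasFDerivAt.add ?_ (HasFDerivAt.fun_sum fun i _ => ?_)
    · have hf₀ : HasFDerivAt (fun q : (Fin m → ℝ) × (Fin (m + 1) → ℝ) =>
          ε * Real.exp (∑ i, q.1 i)) ((ε * Real.exp (∑ i, p.1 i)) • S) p := by
        have h := ((hsum p).exp).const_mul ε
        rwa [smul_smul] at h
      have h := hf₀.fun_smul (hasFDerivAt_const (P 0) p)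
      simpa using h
    · have hneg : (fun q : (Fin m → ℝ) × (Fin (m + 1) → ℝ) => -(q.1 i)) = ⇑(-(Q i)) := by
        funext q; simp [Q]
      have hfi : HasFDerivAt (fun q : (Fin m → ℝ) × (Fin (m + 1) → ℝ) =>
          Real.exp (-(q.1 i))) ((Real.exp (-(p.1 i))) • (-(Q i))) p := by
        have := ((-(Q i)).hasFDerivAt (x := p)).exp
        simpa [Q] using this
      have h := hfi.fun_smul (hasFDerivAt_const (P i.succ) p)
      simpa using h
  have key : ∀ (p V W : (Fin m → ℝ) × (Fin (m + 1) → ℝ)),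
      (fderiv ℝ lam p) V W =
        ε * Real.exp (∑ i, p.1 i) * (∑ i, V.1 i) * W.2 0 +
          ∑ i : Fin m, -(Real.exp (-(p.1 i)) * V.1 i * W.2 i.succ) := by
    intro p V W
    rw [hlamL, (hD p).fderiv]
    simp [P, Q, S, mul_assoc]
  refine ⟨hlamL ▸ hsmooth, ?_⟩
  intro p V hV hVne
  set A := ε * Real.exp (∑ i, p.1 i) with hA_def
  have hA : A ≠ 0 := mul_ne_zero hε0 (Real.exp_ne_zero _)
  have hb : ∀ i : Fin m, Real.exp (-(p.1 i)) ≠ 0 := fun i => Real.exp_ne_zero _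
  have hval : ∀ W : (Fin m → ℝ) × (Fin (m + 1) → ℝ),
      lam p W = A * W.2 0 + ∑ i : Fin m, Real.exp (-(p.1 i)) * W.2 i.succ := fun W =>
    hlam p.1 p.2 W.1 W.2
  by_cases hcase : ∀ i : Fin m, Real.exp (-(p.1 i)) * V.2 i.succ = A * V.2 0
  · -- then V.2 = 0, V.1 ≠ 0; use W = (0, w)
    have h0 : A * V.2 0 + ∑ i : Fin m, Real.exp (-(p.1 i)) * V.2 i.succ = 0 := by
      rw [← hval V]; exact hV
    have hsum0 : (∑ i : Fin m, Real.exp (-(p.1 i)) * V.2 i.succ) = (m : ℝ) * (A * V.2 0) := by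
      rw [Finset.sum_congr rfl fun i _ => hcase i]
      simp [mul_comm]
    have hV0 : V.2 0 = 0 := by
      rw [hsum0] at h0
      have h1 : (1 + (m : ℝ)) * (A * V.2 0) = 0 := by ring_nf; ring_nf at h0; linarith
      have hm1 : (1 + (m : ℝ)) ≠ 0 := by positivity
      have h2 := (mul_eq_zero.mp h1).resolve_left hm1
      exact (mul_eq_zero.mp h2).resolve_left hA
    have hVs : ∀ i : Fin m, V.2 i.succ = 0 := by
      intro i
      have h := hcase i
      rw [hV0, mul_zero] at h
      exact (mul_eq_zero.mp h).resolve_left (hb i)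
    have hV2 : V.2 = 0 := by
      funext j
      refine Fin.cases ?_ ?_ j
      · exact hV0
      · exact hVs
    have hV1 : V.1 ≠ 0 := by
      intro h
      exact hVne (Prod.ext_iff.mpr ⟨h, hV2⟩)
    obtain ⟨j, hj⟩ := Function.ne_iff.mp hV1
    have hj' : V.1 j ≠ 0 := by simpa using hj
    set s := ∑ i, V.1 i with hs_def
    set w : Fin (m+1) → ℝ :=
      Fin.cons (s / A) (fun i => -(V.1 i) / Real.exp (-(p.1 i))) with hw_def
    have hw0 : w 0 = s / A := by rw [hw_def]; exact Fin.cons_zero _ _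
    have hws : ∀ i : Fin m, w i.succ = -(V.1 i) / Real.exp (-(p.1 i)) := by
      intro i; rw [hw_def]; exact Fin.cons_succ _ _ _
    refine ⟨(0, w), ?_, ?_⟩
    · rw [hval]
      have h1 : A * (0, w).2 0 = s := by
        show A * w 0 = s
        rw [hw0]; field_simp
      have h2 : ∀ i : Fin m, Real.exp (-(p.1 i)) * (0, w).2 i.succ = -(V.1 i) := by
        intro i
        show Real.exp (-(p.1 i)) * w i.succ = -(V.1 i)
        rw [hws i]
        field_simp
      rw [h1, Finset.sum_congr rfl fun i _ => h2 i]
      rw [Finset.sum_neg_distrib, ← hs_def]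
      ring
    · have e1 : (fderiv ℝ lam p) V (0, w) = s * s + ∑ i, V.1 i * V.1 i := by
        rw [key p V (0, w)]
        have t2 : ∀ i : Fin m,
            -(Real.exp (-(p.1 i)) * V.1 i * (0, w).2 i.succ) = V.1 i * V.1 i := by
          intro i
          show -(Real.exp (-(p.1 i)) * V.1 i * w i.succ) = V.1 i * V.1 i
          rw [hws i]
          field_simp
        rw [Finset.sum_congr rfl fun i _ => t2 i]
        have t1 : A * (∑ i, V.1 i) * (0, w).2 0 = s * s := by
          show A * (∑ i, V.1 i) * w 0 = s * s
          rw [hw0, ← hs_def]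
          field_simp
        rw [← hA_def, t1]
      have e2 : (fderiv ℝ lam p) (0, w) V = 0 := by
        rw [key p (0, w) V]
        simp only [Pi.zero_apply, Finset.sum_const_zero, mul_zero, zero_mul,
          neg_zero, add_zero, zero_add]
      rw [e1, e2, sub_zero]
      have h3 : 0 < ∑ i, V.1 i * V.1 i := by
        apply Finset.sum_pos' (fun i _ => mul_self_nonneg _)
        exact ⟨j, Finset.mem_univ j, mul_self_pos.mpr hj'⟩
      nlinarith [mul_self_nonneg s]
  · push_neg at hcase
    obtain ⟨i₀, hi₀⟩ := hcase
    refine ⟨(Pi.single i₀ 1, 0), ?_, ?_⟩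
    · rw [hval]
      simp only [Pi.zero_apply, mul_zero, Finset.sum_const_zero, add_zero]
    · have e1 : (fderiv ℝ lam p) V (Pi.single i₀ 1, 0) = 0 := by
        rw [key p V (Pi.single i₀ 1, 0)]
        simp only [Pi.zero_apply, mul_zero, neg_zero,
          Finset.sum_const_zero, add_zero]
      have e2 : (fderiv ℝ lam p) (Pi.single i₀ 1, 0) V =
          A * V.2 0 + -(Real.exp (-(p.1 i₀)) * V.2 i₀.succ) := by
        rw [key p (Pi.single i₀ 1, 0) V, ← hA_def]
        have t1 : (∑ i, ((Pi.single i₀ 1, 0) :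
            (Fin m → ℝ) × (Fin (m + 1) → ℝ)).1 i) = 1 := by
          show (∑ i, (Pi.single i₀ 1 : Fin m → ℝ) i) = 1
          simp
        rw [t1, mul_one]
        congr 1
        have t2 : ∀ i : Fin m,
            -(Real.exp (-(p.1 i)) * ((Pi.single i₀ 1, 0) :
              (Fin m → ℝ) × (Fin (m + 1) → ℝ)).1 i * V.2 i.succ) =
            (if i = i₀ then -(Real.exp (-(p.1 i)) * V.2 i.succ) else 0) := by
          intro i
          show -(Real.exp (-(p.1 i)) * (Pi.single i₀ 1 : Fin m → ℝ) i * V.2 i.succ) = _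
          by_cases h : i = i₀ <;> simp [h, Pi.single_apply]
        rw [Finset.sum_congr rfl fun i _ => t2 i, Finset.sum_ite_eq' Finset.univ i₀]
        simp
      rw [e1, e2]
      intro hcontra
      exact hi₀ (by linarith)
end

section
/- Fix an integer m ≥ 1. Define β : ℝ × ℝ^m × ℝ^{m+1} → ((ℝ × ℝ^m × ℝ^{m+1}) →L[ℝ] ℝ) by β(r, t, θ)(a, u, v) = e^r · λ_+(t,θ)(u,v) + e^{−r} · λ_−(t,θ)(u,v) (the Liouville form e^r α_+ + e^{−r} α_−, which does not involve the dr-component a). Then β is infinitely differentiable and for every point q ∈ ℝ × ℝ^m × ℝ^{m+1} the alternating bilinear form Ω(q)(V, W) := (Dβ(q) V)(W) − (Dβ(q) W)(V) is nondegenerate on ℝ × ℝ^m × ℝ^{m+1}: for every nonzero V there is W with Ω(q)(V,W) ≠ 0. (This says that d(e^r α_+ + e^{−r} α_−) is a symplectic form on (ℝ^m × ℝ^{m+1}) × ℝ, i.e., (α_+, α_−) is a Liouville pair.) -/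
open Real ContinuousLinearMap

namespace Stmt3Aux

variable (m : ℕ)

abbrev Em := ℝ × ((Fin m → ℝ) × (Fin (m + 1) → ℝ))

noncomputable def cR : Em m →L[ℝ] ℝ := ContinuousLinearMap.fst ℝ ℝ _

noncomputable def cT (j : Fin m) : Em m →L[ℝ] ℝ :=
  (ContinuousLinearMap.proj j).comp
    ((ContinuousLinearMap.fst ℝ _ _).comp (ContinuousLinearMap.snd ℝ ℝ _))

noncomputable def cTh (k : Fin (m + 1)) : Em m →L[ℝ] ℝ :=
  (ContinuousLinearMap.proj k).comp
    ((ContinuousLinearMap.snd ℝ _ _).comp (ContinuousLinearMap.snd ℝ ℝ _))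

@[simp] lemma cR_apply (q : Em m) : cR m q = q.1 := rfl
@[simp] lemma cT_apply (j : Fin m) (q : Em m) : cT m j q = q.2.1 j := rfl
@[simp] lemma cTh_apply (k : Fin (m + 1)) (q : Em m) : cTh m k q = q.2.2 k := rfl

noncomputable def Bm : Em m → Em m →L[ℝ] ℝ := fun q =>
  ((Real.exp q.1 - Real.exp (-q.1)) * Real.exp (∑ j, q.2.1 j)) • cTh m 0 +
    ∑ i : Fin m, ((Real.exp q.1 + Real.exp (-q.1)) * Real.exp (-(q.2.1 i))) • cTh m i.succ

lemma Bm_apply (q w : Em m) :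
    Bm m q w = (Real.exp q.1 - Real.exp (-q.1)) * Real.exp (∑ j, q.2.1 j) * w.2.2 0 +
      ∑ i : Fin m, (Real.exp q.1 + Real.exp (-q.1)) * Real.exp (-(q.2.1 i)) * w.2.2 i.succ := by
  simp [Bm]

lemma contDiff_Bm : ContDiff ℝ (⊤ : ℕ∞) (Bm m) := by
  apply ContDiff.add
  · apply ContDiff.fun_smul _ contDiff_const
    exact ((Real.contDiff_exp.comp contDiff_fst).sub
      (Real.contDiff_exp.comp contDiff_fst.neg)).mul
      (Real.contDiff_exp.comp (ContDiff.sum fun j _ => (cT m j).contDiff))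
  · apply ContDiff.sum fun i _ => ?_
    apply ContDiff.fun_smul _ contDiff_const
    exact ((Real.contDiff_exp.comp contDiff_fst).add
      (Real.contDiff_exp.comp contDiff_fst.neg)).mul
      (Real.contDiff_exp.comp (cT m i).contDiff.neg)

noncomputable def Dm (q : Em m) : Em m →L[ℝ] Em m →L[ℝ] ℝ :=
  ((((Real.exp q.1 + Real.exp (-q.1)) * Real.exp (∑ j, q.2.1 j)) • cR m +
      ((Real.exp q.1 - Real.exp (-q.1)) * Real.exp (∑ j, q.2.1 j)) • ∑ j, cT m j).smulRight
    (cTh m 0)) +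
  ∑ i : Fin m,
    ((((Real.exp q.1 - Real.exp (-q.1)) * Real.exp (-(q.2.1 i))) • cR m -
        ((Real.exp q.1 + Real.exp (-q.1)) * Real.exp (-(q.2.1 i))) • cT m i).smulRight
      (cTh m i.succ))

lemma Dm_apply (q V W : Em m) :
    Dm m q V W =
      ((Real.exp q.1 + Real.exp (-q.1)) * V.1 +
        (Real.exp q.1 - Real.exp (-q.1)) * ∑ j, V.2.1 j) * Real.exp (∑ j, q.2.1 j) * W.2.2 0 +
      ∑ i : Fin m, ((Real.exp q.1 - Real.exp (-q.1)) * V.1 -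
        (Real.exp q.1 + Real.exp (-q.1)) * V.2.1 i) * Real.exp (-(q.2.1 i)) * W.2.2 i.succ := by
  simp [Dm, Finset.sum_apply, ContinuousLinearMap.smulRight_apply]
  congr 1
  · ring
  · exact Finset.sum_congr rfl fun i _ => by ring

lemma hasFDerivAt_Bm (q : Em m) : HasFDerivAt (Bm m) (Dm m q) q := by
  have hR : HasFDerivAt (fun p : Em m => Real.exp p.1) (Real.exp q.1 • cR m) q :=
    (Real.hasDerivAt_exp q.1).comp_hasFDerivAt q (hasFDerivAt_fst)
  have hNR : HasFDerivAt (fun p : Em m => Real.exp (-p.1))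
      ((Real.exp (-q.1) * (-1)) • cR m) q := by
    have h1 : HasDerivAt (fun x : ℝ => Real.exp (-x)) (Real.exp (-q.1) * (-1)) q.1 :=
      (Real.hasDerivAt_exp (-q.1)).comp q.1 (hasDerivAt_neg q.1)
    exact h1.comp_hasFDerivAt q hasFDerivAt_fst
  have hSum : HasFDerivAt (fun p : Em m => ∑ j, p.2.1 j) (∑ j, cT m j) q :=
    HasFDerivAt.fun_sum fun j _ => (cT m j).hasFDerivAt
  have hESum : HasFDerivAt (fun p : Em m => Real.exp (∑ j, p.2.1 j))
      (Real.exp (∑ j, q.2.1 j) • ∑ j, cT m j) q :=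
    (Real.hasDerivAt_exp _).comp_hasFDerivAt q hSum
  have hENi : ∀ i : Fin m, HasFDerivAt (fun p : Em m => Real.exp (-(p.2.1 i)))
      ((Real.exp (-(q.2.1 i)) * (-1)) • cT m i) q := by
    intro i
    have h1 : HasDerivAt (fun x : ℝ => Real.exp (-x)) (Real.exp (-(q.2.1 i)) * (-1)) (q.2.1 i) :=
      (Real.hasDerivAt_exp (-(q.2.1 i))).comp (q.2.1 i) (hasDerivAt_neg (q.2.1 i))
    exact h1.comp_hasFDerivAt q (cT m i).hasFDerivAt
  have h0 := (((hR.sub hNR).mul hESum).smul_const (cTh m 0))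
  have hi := fun i : Fin m => (((hR.add hNR).mul (hENi i)).smul_const (cTh m i.succ))
  have := h0.add (HasFDerivAt.fun_sum (fun i (_ : i ∈ Finset.univ) => hi i))
  refine HasFDerivAt.congr_fderiv this (Eq.symm ?_)
  refine ContinuousLinearMap.ext fun V => ContinuousLinearMap.ext fun W => ?_
  simp [Dm]
  congr 1
  · ring
  · exact Finset.sum_congr rfl fun i _ => by ring



noncomputable def Phi (C S Ee : ℝ) (e : Fin m → ℝ) (V W : Em m) : ℝ :=
  (C * V.1 + S * ∑ j, V.2.1 j) * Ee * W.2.2 0 +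
    ∑ i : Fin m, (S * V.1 - C * V.2.1 i) * e i * W.2.2 i.succ

lemma Dm_eq_Phi (q V W : Em m) :
    Dm m q V W = Phi m (Real.exp q.1 + Real.exp (-q.1)) (Real.exp q.1 - Real.exp (-q.1))
      (Real.exp (∑ j, q.2.1 j)) (fun i => Real.exp (-(q.2.1 i))) V W := by
  rw [Dm_apply]; rfl

lemma nondeg_Phi (C S Ee : ℝ) (e : Fin m → ℝ) (hC : 0 < C) (hEe : 0 < Ee)
    (he : ∀ i, 0 < e i) (V : Em m) (hV : V ≠ 0) :
    ∃ W : Em m, Phi m C S Ee e V W - Phi m C S Ee e W V ≠ 0 := by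
  obtain ⟨a, u, v⟩ := V
  by_cases h1 : C * a + S * (∑ j, u j) = 0
  · by_cases h2 : ∀ i, S * a - C * u i = 0
    · -- derive a = 0 and u = 0
      have hSu : (m : ℝ) * (S * a) - C * ∑ j, u j = 0 := by
        have h3 : ∑ i : Fin m, (S * a - C * u i) = 0 := Finset.sum_eq_zero fun i _ => h2 i
        have h4 : (m : ℝ) * (S * a) - C * ∑ j, u j = ∑ i : Fin m, (S * a - C * u i) := by
          rw [Finset.sum_sub_distrib, Finset.sum_const, Finset.card_univ, Fintype.card_fin,
            Finset.mul_sum, nsmul_eq_mul]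
        rw [h4, h3]
      have ha : a = 0 := by
        have hkey : a * (C ^ 2 + (m : ℝ) * S ^ 2) = 0 := by
          linear_combination C * h1 + S * hSu
        have hpos : 0 < C ^ 2 + (m : ℝ) * S ^ 2 := by positivity
        exact (mul_eq_zero.1 hkey).resolve_right hpos.ne'
      have hu : u = 0 := by
        funext i
        have h5 := h2 i
        rw [ha, mul_zero, zero_sub, neg_eq_zero] at h5
        exact (mul_eq_zero.1 h5).resolve_left hC.ne'
      have hv : v ≠ 0 := by
        intro h
        exact hV (by simp [Prod.ext_iff, ha, hu, h])
      have hPhiV : ∀ W, Phi m C S Ee e (a, u, v) W = 0 := by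
        intro W; simp [Phi, ha, hu]
      by_cases h3 : C * Ee * v 0 + S * ∑ i, e i * v i.succ = 0
      · by_cases h4 : ∀ i, S * Ee * v 0 - C * (e i * v i.succ) = 0
        · exfalso
          have hSv : (m : ℝ) * (S * Ee * v 0) - C * ∑ i, e i * v i.succ = 0 := by
            have h5 : ∑ i : Fin m, (S * Ee * v 0 - C * (e i * v i.succ)) = 0 :=
              Finset.sum_eq_zero fun i _ => h4 i
            have h6 : (m : ℝ) * (S * Ee * v 0) - C * ∑ i, e i * v i.succ
                = ∑ i : Fin m, (S * Ee * v 0 - C * (e i * v i.succ)) := by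
              rw [Finset.sum_sub_distrib, Finset.sum_const, Finset.card_univ, Fintype.card_fin,
                Finset.mul_sum, nsmul_eq_mul]
            rw [h6, h5]
          have hv0 : v 0 = 0 := by
            have hkey : v 0 * (Ee * (C ^ 2 + (m : ℝ) * S ^ 2)) = 0 := by
              linear_combination C * h3 + S * hSv
            have hpos : 0 < Ee * (C ^ 2 + (m : ℝ) * S ^ 2) := by positivity
            exact (mul_eq_zero.1 hkey).resolve_right hpos.ne'
          apply hv
          funext k
          refine Fin.cases ?_ ?_ k
          · exact hv0
          · intro i
            have h5 := h4 i
            rw [hv0, mul_zero, zero_sub, neg_eq_zero] at h5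
            have h6 := (mul_eq_zero.1 h5).resolve_left hC.ne'
            exact (mul_eq_zero.1 h6).resolve_left (he i).ne'
        · push_neg at h4
          obtain ⟨i, h4⟩ := h4
          refine ⟨(0, Pi.single i 1, 0), ?_⟩
          have hW : Phi m C S Ee e (0, Pi.single i 1, 0) (a, u, v)
              = S * Ee * v 0 - C * (e i * v i.succ) := by
            simp [Phi, Pi.single_apply, mul_ite, ite_mul, Finset.sum_ite_eq']
            ring
          rw [hPhiV, hW, zero_sub, neg_ne_zero]
          exact h4
      · refine ⟨(1, 0, 0), ?_⟩
        have hW : Phi m C S Ee e (1, 0, 0) (a, u, v)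
            = C * Ee * v 0 + S * ∑ i, e i * v i.succ := by
          simp only [Phi, Finset.mul_sum]
          simp
          exact Finset.sum_congr rfl fun i _ => by ring
        rw [hPhiV, hW, zero_sub, neg_ne_zero]
        exact h3
    · push_neg at h2
      obtain ⟨i, h2⟩ := h2
      refine ⟨(0, 0, Pi.single i.succ 1), ?_⟩
      have hA : Phi m C S Ee e (a, u, v) (0, 0, Pi.single i.succ 1)
          = (S * a - C * u i) * e i := by
        simp [Phi, Pi.single_apply, (Fin.succ_ne_zero i).symm, Fin.succ_inj, mul_ite, ite_mul,
          Finset.sum_ite_eq']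
      have hB : Phi m C S Ee e (0, 0, Pi.single i.succ 1) (a, u, v) = 0 := by
        simp [Phi]
      rw [hA, hB, sub_zero]
      exact mul_ne_zero h2 (he i).ne'
  · refine ⟨(0, 0, Pi.single 0 1), ?_⟩
    have hA : Phi m C S Ee e (a, u, v) (0, 0, Pi.single 0 1)
        = (C * a + S * ∑ j, u j) * Ee := by
      simp [Phi, Pi.single_apply, Fin.succ_ne_zero]
    have hB : Phi m C S Ee e (0, 0, Pi.single 0 1) (a, u, v) = 0 := by
      simp [Phi]
    rw [hA, hB, sub_zero]
    exact mul_ne_zero h1 hEe.ne'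

end Stmt3Aux



/-!
STATEMENT 3: Fix m ≥ 1.  With λ_+ and λ_− encoding the contact forms α_± (see
hlamP, hlamM), define β(r,t,θ)(a,u,v) = e^r λ_+(t,θ)(u,v) + e^{−r} λ_−(t,θ)(u,v)
(the Liouville form e^r α_+ + e^{−r} α_−).  Then β is C^∞ and for every point q
the alternating bilinear form Ω(q)(V,W) := (Dβ(q)V)(W) − (Dβ(q)W)(V) is
nondegenerate on ℝ × ℝ^m × ℝ^{m+1}: for every nonzero V there is W with
Ω(q)(V,W) ≠ 0.  (d(e^r α_+ + e^{−r} α_−) is symplectic, i.e. (α_+, α_−) is a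
Liouville pair.)
-/
theorem stmt_3 (m : ℕ) (hm : 1 ≤ m)
    (lamP lamM : (Fin m → ℝ) × (Fin (m + 1) → ℝ) →
      ((Fin m → ℝ) × (Fin (m + 1) → ℝ)) →L[ℝ] ℝ)
    (hlamP : ∀ (t : Fin m → ℝ) (θ : Fin (m + 1) → ℝ) (u : Fin m → ℝ) (v : Fin (m + 1) → ℝ),
      lamP (t, θ) (u, v) =
        Real.exp (∑ i, t i) * v 0 + ∑ i : Fin m, Real.exp (-(t i)) * v i.succ)
    (hlamM : ∀ (t : Fin m → ℝ) (θ : Fin (m + 1) → ℝ) (u : Fin m → ℝ) (v : Fin (m + 1) → ℝ),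
      lamM (t, θ) (u, v) =
        -(Real.exp (∑ i, t i)) * v 0 + ∑ i : Fin m, Real.exp (-(t i)) * v i.succ)
    (β : ℝ × ((Fin m → ℝ) × (Fin (m + 1) → ℝ)) →
      (ℝ × ((Fin m → ℝ) × (Fin (m + 1) → ℝ))) →L[ℝ] ℝ)
    (hβ : ∀ (r : ℝ) (p : (Fin m → ℝ) × (Fin (m + 1) → ℝ)) (a : ℝ)
        (w : (Fin m → ℝ) × (Fin (m + 1) → ℝ)),
      β (r, p) (a, w) = Real.exp r * lamP p w + Real.exp (-r) * lamM p w) :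
    ContDiff ℝ (⊤ : ℕ∞) β ∧
      ∀ (q V : ℝ × ((Fin m → ℝ) × (Fin (m + 1) → ℝ))), V ≠ 0 →
        ∃ W : ℝ × ((Fin m → ℝ) × (Fin (m + 1) → ℝ)),
          (fderiv ℝ β q V) W - (fderiv ℝ β q W) V ≠ 0 := by
  have hβB : β = Stmt3Aux.Bm m := by
    funext q
    refine ContinuousLinearMap.ext fun w => ?_
    obtain ⟨r, t, θ⟩ := q
    obtain ⟨a, u, v⟩ := w
    rw [hβ r (t, θ) a (u, v), hlamP, hlamM, Stmt3Aux.Bm_apply]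
    have hs : ∑ i : Fin m, (Real.exp r + Real.exp (-r)) * Real.exp (-(t i)) * v i.succ
        = Real.exp r * ∑ i : Fin m, Real.exp (-(t i)) * v i.succ
          + Real.exp (-r) * ∑ i : Fin m, Real.exp (-(t i)) * v i.succ := by
      rw [Finset.mul_sum, Finset.mul_sum, ← Finset.sum_add_distrib]
      exact Finset.sum_congr rfl fun i _ => by ring
    simp only []
    rw [hs]
    ring
  constructor
  · rw [hβB]; exact Stmt3Aux.contDiff_Bm m
  · intro q V hV
    have hfd : fderiv ℝ β q = Stmt3Aux.Dm m q := by
      rw [hβB]; exact (Stmt3Aux.hasFDerivAt_Bm m q).fderiv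
    obtain ⟨W, hW⟩ := Stmt3Aux.nondeg_Phi m (Real.exp q.1 + Real.exp (-q.1))
      (Real.exp q.1 - Real.exp (-q.1)) (Real.exp (∑ j, q.2.1 j))
      (fun i => Real.exp (-(q.2.1 i))) (by positivity) (Real.exp_pos _)
      (fun i => Real.exp_pos _) V hV
    refine ⟨W, ?_⟩
    rw [hfd, Stmt3Aux.Dm_eq_Phi, Stmt3Aux.Dm_eq_Phi]
    exact hW
end
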